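/- arXiv:1409.5348 — 3 statements merged into one kernel-verified Lean document; each statement's English description precedes it below -/
import Mathlib

section
/- Let X be a real Banach space and {C_n : n ∈ ℕ} a family of closed connected subsets of X. Assume: (i) there exist points z_n ∈ C_n for each n and z_* ∈ X with z_n → z_*; (ii) lim_{n→∞} sup{‖u‖ : u ∈ C_n} = ∞; (iii) for every ρ > 0, the set (⋃_{n=1}^∞ C_n) ∩ B_ρ is relatively compact in X, where B_ρ is the closed ball of radius ρ centered at the origin. Then the superior limit 𝒟 := {x ∈ X : there exist a subsequence (n_k) and points x_{n_k} ∈ C_{n_k} with x_{n_k} → x} contains a connected component 𝒞 which is unbounded and satisfies z_* ∈ 𝒞. -/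
/-!
Suppose the component `𝒞` of `z*` in the superior limit `𝒟` were bounded. Since `𝒟` is closed,
(iii) makes `K = 𝒟 ∩ B_ρ` compact for large `ρ`, and in the compact space `K` the component of
`z*` is the intersection of its clopen neighbourhoods. Hence some piece of `K` that is clopen in
`K` contains `z*` and stays inside the open ball `B_ρ°`; separating it from the rest of `K` yields
an open set `V ∋ z*` with `closure V ⊆ B_ρ°` whose frontier misses `K`. For large `n` the connected
set `C_n` meets `V` (near `z_n`) and leaves it (by (ii)), so it meets `frontier V`; by (iii) these
frontier points accumulate at a point of `𝒟 ∩ frontier V ⊆ K ∩ frontier V = ∅`.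
-/

open Set Filter Topology Metric

section Topology

variable {X : Type*} [TopologicalSpace X]

theorem IsPreconnected.inter_frontier_nonempty {s t : Set X} (hs : IsPreconnected s)
    (hst : (s ∩ t).Nonempty) (hst' : (s \ t).Nonempty) : (s ∩ frontier t).Nonempty := by
  by_contra hfr
  have hcover : s ⊆ interior t ∪ (closure t)ᶜ := fun x hxs => by
    by_cases hx : x ∈ closure t
    · exact Or.inl (by_contra fun hxi => hfr ⟨x, hxs, hx, hxi⟩)
    · exact Or.inr hx
  have hinner : (s ∩ interior t).Nonempty := by
    obtain ⟨x, hxs, hxt⟩ := hst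
    exact ⟨x, hxs, by_contra fun hxi => hfr ⟨x, hxs, subset_closure hxt, hxi⟩⟩
  have houter : (s ∩ (closure t)ᶜ).Nonempty := by
    obtain ⟨x, hxs, hxt⟩ := hst'
    exact ⟨x, hxs, fun hxc => hfr ⟨x, hxs, hxc, fun hxi => hxt (interior_subset hxi)⟩⟩
  obtain ⟨x, -, hxi, hxc⟩ :=
    hs _ _ isOpen_interior isClosed_closure.isOpen_compl hcover hinner houter
  exact hxc (interior_subset_closure hxi)

theorem exists_isClopen_mem_subset_of_connectedComponent_subset [T2Space X] [CompactSpace X]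
    {x : X} {U : Set X} (hU : IsOpen U) (hxU : connectedComponent x ⊆ U) :
    ∃ V, IsClopen V ∧ x ∈ V ∧ V ⊆ U := by
  have : Nonempty {s : Set X // IsClopen s ∧ x ∈ s} := ⟨⟨univ, isClopen_univ, mem_univ x⟩⟩
  have hdir : Directed (· ⊇ ·) fun s : {s : Set X // IsClopen s ∧ x ∈ s} => (s : Set X) :=
    fun s t => ⟨⟨s ∩ t, s.2.1.inter t.2.1, s.2.2, t.2.2⟩, inter_subset_left, inter_subset_right⟩
  obtain ⟨s, hs⟩ := exists_subset_nhds_of_isCompact' hdir (fun s => s.2.1.isClosed.isCompact)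
    (fun s => s.2.1.isClosed) fun y hy =>
      hU.mem_nhds (hxU (by rwa [connectedComponent_eq_iInter_isClopen]))
  exact ⟨s, s.2.1, s.2.2, hs⟩

theorem IsCompact.exists_isOpen_frontier_disjoint [T3Space X] {K W : Set X} {x : X}
    (hK : IsCompact K) (hx : x ∈ K) (hW : IsOpen W) (hKW : connectedComponentIn K x ⊆ W) :
    ∃ V, IsOpen V ∧ x ∈ V ∧ closure V ⊆ W ∧ Disjoint K (frontier V) := by
  have : CompactSpace K := isCompact_iff_compactSpace.mp hK
  rw [connectedComponentIn_eq_image hx, image_subset_iff] at hKW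
  obtain ⟨U, hU, hxU, hUW⟩ := exists_isClopen_mem_subset_of_connectedComponent_subset
    (hW.preimage continuous_subtype_val) hKW
  have hUcpt : IsCompact ((↑) '' U : Set X) := hU.isClosed.isCompact.image continuous_subtype_val
  have hFclosed : IsClosed (((↑) '' Uᶜ : Set X) ∪ Wᶜ) :=
    (hU.compl.isClosed.isCompact.image continuous_subtype_val).isClosed.union hW.isClosed_compl
  have hdisj : Disjoint ((↑) '' U : Set X) (((↑) '' Uᶜ) ∪ Wᶜ) := by
    rw [disjoint_union_right, image_compl_eq_range_sdiff_image Subtype.val_injective]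
    exact ⟨disjoint_sdiff_right, disjoint_compl_right_iff_subset.mpr (image_subset_iff.mpr hUW)⟩
  obtain ⟨V, V', hV, hV', hUV, hFV', hVV'⟩ :=
    SeparatedNhds.of_isCompact_isClosed hUcpt hFclosed hdisj
  have hclV : Disjoint (closure V) V' := hVV'.closure_left hV'
  refine ⟨V, hV, hUV ⟨⟨x, hx⟩, hxU, rfl⟩,
    fun y hy => by_contra fun hyW => hclV.notMem_of_mem_left hy (hFV' (Or.inr hyW)), ?_⟩
  refine disjoint_left.mpr fun y hyK hyV => ?_
  by_cases hy : (⟨y, hyK⟩ : K) ∈ U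
  · exact hyV.2 (hV.interior_eq.symm ▸ hUV ⟨_, hy, rfl⟩)
  · exact hclV.notMem_of_mem_left hyV.1 (hFV' (Or.inl ⟨_, hy, rfl⟩))

end Topology

section UpperLimit

variable {X : Type*} [TopologicalSpace X]

def upperLimit (C : ℕ → Set X) : Set X :=
  {x | ∃ φ : ℕ → ℕ, StrictMono φ ∧ ∃ y : ℕ → X, (∀ j, y j ∈ C (φ j)) ∧ Tendsto y atTop (𝓝 x)}

theorem mem_upperLimit_of_tendsto {C : ℕ → Set X} {z : ℕ → X} {x : X} (hz : ∀ n, z n ∈ C n)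
    (hzx : Tendsto z atTop (𝓝 x)) : x ∈ upperLimit C :=
  ⟨id, strictMono_id, z, hz, hzx⟩

theorem mem_upperLimit_iff_frequently [FirstCountableTopology X] {C : ℕ → Set X} {x : X} :
    x ∈ upperLimit C ↔ ∀ U ∈ 𝓝 x, ∃ᶠ n in atTop, (C n ∩ U).Nonempty := by
  constructor
  · rintro ⟨φ, hφ, y, hyC, hy⟩ U hU
    refine frequently_atTop.mpr fun N => ?_
    obtain ⟨j, hjU, hjN⟩ := ((hy.eventually_mem hU).and (eventually_ge_atTop N)).exists
    exact ⟨φ j, hjN.trans (hφ.id_le j), y j, hyC j, hjU⟩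
  · intro h
    obtain ⟨u, hu⟩ := (𝓝 x).exists_antitone_basis
    obtain ⟨φ, hφ, hφu⟩ := extraction_forall_of_frequently fun k => h (u k) (hu.mem k)
    choose y hyC hyu using hφu
    exact ⟨φ, hφ, y, hyC, hu.tendsto hyu⟩

theorem isClosed_upperLimit [FirstCountableTopology X] (C : ℕ → Set X) :
    IsClosed (upperLimit C) := by
  refine closure_subset_iff_isClosed.mp fun x hx => mem_upperLimit_iff_frequently.mpr ?_
  intro U hU
  obtain ⟨U', hU'U, hU', hxU'⟩ := mem_nhds_iff.mp hU
  obtain ⟨y, hyU', hy⟩ := mem_closure_iff.mp hx U' hU' hxU'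
  exact (mem_upperLimit_iff_frequently.mp hy U' (hU'.mem_nhds hyU')).mono
    fun n => Nonempty.mono (inter_subset_inter_right _ hU'U)

theorem upperLimit_inter_subset_closure {C : ℕ → Set X} {U : Set X} (hU : IsOpen U) :
    upperLimit C ∩ U ⊆ closure ((⋃ n, C n) ∩ U) := by
  rintro x ⟨⟨φ, -, y, hyC, hy⟩, hxU⟩
  exact mem_closure_of_tendsto hy
    ((hy.eventually_mem (hU.mem_nhds hxU)).mono fun j hj => ⟨mem_iUnion_of_mem _ (hyC j), hj⟩)

theorem upperLimit_inter_nonempty [FirstCountableTopology X] {C : ℕ → Set X} {F L : Set X}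
    (hF : IsClosed F) (hL : IsCompact L) (hFL : (⋃ n, C n) ∩ F ⊆ L)
    (h : ∃ᶠ n in atTop, (C n ∩ F).Nonempty) : (upperLimit C ∩ F).Nonempty := by
  obtain ⟨φ, hφ, hφF⟩ := extraction_of_frequently_atTop h
  choose y hyC hyF using hφF
  obtain ⟨x, -, ψ, hψ, hyx⟩ :=
    hL.tendsto_subseq fun k => hFL ⟨mem_iUnion_of_mem _ (hyC k), hyF k⟩
  exact ⟨x, ⟨φ ∘ ψ, hφ.comp hψ, y ∘ ψ, fun k => hyC (ψ k), hyx⟩,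
    hF.mem_of_tendsto hyx (Eventually.of_forall fun k => hyF (ψ k))⟩

end UpperLimit

theorem not_isBounded_connectedComponentIn_upperLimit {X : Type*} [NormedAddCommGroup X]
    {C : ℕ → Set X} (hconn : ∀ n, IsPreconnected (C n)) {z : ℕ → X} (hz : ∀ n, z n ∈ C n)
    {zstar : X} (hzlim : Tendsto z atTop (𝓝 zstar))
    (hunbdd : ∀ M : ℝ, ∃ N₀ : ℕ, ∀ n ≥ N₀, ∃ u ∈ C n, M < ‖u‖)
    (hcpt : ∀ ρ > 0, IsCompact (closure ((⋃ n, C n) ∩ closedBall 0 ρ))) :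
    ¬ Bornology.IsBounded (connectedComponentIn (upperLimit C) zstar) := by
  intro hbdd
  obtain ⟨ρ, hρ, hρ𝒞⟩ := hbdd.subset_ball_lt 0 0
  set K := upperLimit C ∩ closedBall 0 ρ
  have hKcpt : IsCompact K := by
    refine (hcpt (ρ + 1) (by linarith)).of_isClosed_subset
      ((isClosed_upperLimit C).inter isClosed_closedBall) ?_
    calc K ⊆ upperLimit C ∩ ball 0 (ρ + 1) :=
          inter_subset_inter_right _ (closedBall_subset_ball (by linarith))
      _ ⊆ closure ((⋃ n, C n) ∩ ball 0 (ρ + 1)) := upperLimit_inter_subset_closure isOpen_ball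
      _ ⊆ closure ((⋃ n, C n) ∩ closedBall 0 (ρ + 1)) :=
          closure_mono (inter_subset_inter_right _ ball_subset_closedBall)
  have hzD : zstar ∈ upperLimit C := mem_upperLimit_of_tendsto hz hzlim
  have hzK : zstar ∈ K := ⟨hzD, ball_subset_closedBall (hρ𝒞 (mem_connectedComponentIn hzD))⟩
  obtain ⟨V, hV, hzV, hVρ, hKV⟩ := hKcpt.exists_isOpen_frontier_disjoint hzK isOpen_ball
    ((connectedComponentIn_mono _ inter_subset_left).trans hρ𝒞)
  have hVρ' : closure V ⊆ closedBall 0 ρ := hVρ.trans ball_subset_closedBall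
  have hcross : ∃ᶠ n in atTop, (C n ∩ frontier V).Nonempty := by
    refine (((hzlim.eventually_mem (hV.mem_nhds hzV)).and
      (eventually_atTop.mpr (hunbdd ρ))).mono ?_).frequently
    rintro n ⟨hznV, u, huC, hρu⟩
    refine (hconn n).inter_frontier_nonempty ⟨z n, hz n, hznV⟩ ⟨u, huC, fun huV => ?_⟩
    exact hρu.not_ge (mem_closedBall_zero_iff.mp (hVρ' (subset_closure huV)))
  obtain ⟨x, hxD, hxV⟩ := upperLimit_inter_nonempty isClosed_frontier (hcpt ρ hρ)
    (fun y hy => subset_closure ⟨hy.1, hVρ' hy.2.1⟩) hcross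
  exact hKV.notMem_of_mem_left ⟨hxD, hVρ' hxV.1⟩ hxV

theorem stmt4_general (X : Type*) [NormedAddCommGroup X]
    (C : ℕ → Set X) (hconn : ∀ n, IsConnected (C n))
    (z : ℕ → X) (hz : ∀ n, z n ∈ C n) (zstar : X)
    (hzlim : Tendsto z atTop (nhds zstar))
    (hunbdd : ∀ M : ℝ, ∃ N₀ : ℕ, ∀ n ≥ N₀, ∃ u ∈ C n, M < ‖u‖)
    (hcpt : ∀ ρ > 0, IsCompact (closure ((⋃ n, C n) ∩ Metric.closedBall 0 ρ))) :
    ∃ 𝒞 : Set X,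
      𝒞 ⊆ {x | ∃ φ : ℕ → ℕ, StrictMono φ ∧
            ∃ y : ℕ → X, (∀ j, y j ∈ C (φ j)) ∧ Tendsto y atTop (nhds x)} ∧
      IsConnected 𝒞 ∧
      (∀ 𝒞' : Set X, 𝒞 ⊆ 𝒞' →
        𝒞' ⊆ {x | ∃ φ : ℕ → ℕ, StrictMono φ ∧
              ∃ y : ℕ → X, (∀ j, y j ∈ C (φ j)) ∧ Tendsto y atTop (nhds x)} →
        IsConnected 𝒞' → 𝒞' = 𝒞) ∧
      ¬ Bornology.IsBounded 𝒞 ∧ zstar ∈ 𝒞 := by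
  have hzD : zstar ∈ upperLimit C := mem_upperLimit_of_tendsto hz hzlim
  refine ⟨connectedComponentIn (upperLimit C) zstar, connectedComponentIn_subset _ _,
    isConnected_connectedComponentIn_iff.mpr hzD, fun 𝒞' h𝒞 h𝒞D h𝒞' => ?_,
    not_isBounded_connectedComponentIn_upperLimit (fun n => (hconn n).isPreconnected) hz hzlim
      hunbdd hcpt, mem_connectedComponentIn hzD⟩
  exact (h𝒞'.isPreconnected.subset_connectedComponentIn (h𝒞 (mem_connectedComponentIn hzD))
    h𝒞D).antisymm h𝒞

/-- Lemma 2.1 of Ma–An type. Let `X` be a real Banach space and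
`C n` a family of closed connected subsets of `X`. Under (i) existence of points
`z n ∈ C n` converging to `zstar`, (ii) `sup {‖u‖ : u ∈ C n} → ∞`, and
(iii) relative compactness of `(⋃ n, C n) ∩ B_ρ` for every `ρ > 0`, the superior
limit `𝒟` of the sets `C n` contains an unbounded connected component containing
`zstar`. -/
theorem stmt4 (X : Type*) [NormedAddCommGroup X] [NormedSpace ℝ X] [CompleteSpace X]
    (C : ℕ → Set X) (hclosed : ∀ n, IsClosed (C n)) (hconn : ∀ n, IsConnected (C n))
    (z : ℕ → X) (hz : ∀ n, z n ∈ C n) (zstar : X)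
    (hzlim : Tendsto z atTop (nhds zstar))
    (hunbdd : ∀ M : ℝ, ∃ N₀ : ℕ, ∀ n ≥ N₀, ∃ u ∈ C n, M < ‖u‖)
    (hcpt : ∀ ρ > 0, IsCompact (closure ((⋃ n, C n) ∩ Metric.closedBall 0 ρ))) :
    ∃ 𝒞 : Set X,
      𝒞 ⊆ {x | ∃ φ : ℕ → ℕ, StrictMono φ ∧
            ∃ y : ℕ → X, (∀ j, y j ∈ C (φ j)) ∧ Tendsto y atTop (nhds x)} ∧
      IsConnected 𝒞 ∧
      (∀ 𝒞' : Set X, 𝒞 ⊆ 𝒞' →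
        𝒞' ⊆ {x | ∃ φ : ℕ → ℕ, StrictMono φ ∧
              ∃ y : ℕ → X, (∀ j, y j ∈ C (φ j)) ∧ Tendsto y atTop (nhds x)} →
        IsConnected 𝒞' → 𝒞' = 𝒞) ∧
      ¬ Bornology.IsBounded 𝒞 ∧ zstar ∈ 𝒞 :=
  stmt4_general X C hconn z hz zstar hzlim hunbdd hcpt
end

section
/- Let N ≥ 2 be an integer, 0 ≤ δ < R, λ ≥ 0, and let f : [δ,R] × ℝ → ℝ be continuous, Lipschitz continuous in its second variable on bounded sets, with f(r,0) = 0 for all r ∈ [δ,R]. Let τ ∈ (δ,R) and let u ∈ C¹([δ,R]) with |u'(r)| < 1 for all r be such that r ↦ r^{N−1}φ₁(u'(r)) is continuously differentiable, (r^{N−1}φ₁(u'))' + λ r^{N−1} f(r,u) = 0 on (δ,R), and u(τ) = u'(τ) = 0. Then u ≡ 0 on [δ,R]. -/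
open Set Filter Topology

/-- `φ₁(s) = s / √(1 - s²)`. -/
noncomputable def phi1 (s : ℝ) : ℝ := s / Real.sqrt (1 - s ^ 2)

/-- Condition (A1): `f : [0,R] × (-α,α) → ℝ` is continuous, `R < α ≤ ∞`, and
`f(r,s) s > 0` for `r ∈ [0,R]` and `0 < |s| < α`. -/
def CondA1 (R : ℝ) (α : EReal) (f : ℝ → ℝ → ℝ) : Prop :=
  (R : EReal) < α ∧
  ContinuousOn (fun p : ℝ × ℝ => f p.1 p.2)
    {p : ℝ × ℝ | p.1 ∈ Icc 0 R ∧ ((|p.2| : ℝ) : EReal) < α} ∧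
  ∀ r ∈ Icc 0 R, ∀ s : ℝ, ((|s| : ℝ) : EReal) < α → s ≠ 0 → 0 < f r s * s

/-- Condition (A2): `f(r,s)/s → m(r)` as `s → 0`, uniformly in `r ∈ [δ,R]`, with
`m` continuous, nonnegative, and not identically zero on any nondegenerate
subinterval of `[δ,R]`. -/
def CondA2 (δ R : ℝ) (f : ℝ → ℝ → ℝ) (m : ℝ → ℝ) : Prop :=
  ContinuousOn m (Icc δ R) ∧
  (∀ r ∈ Icc δ R, 0 ≤ m r) ∧
  (∀ a b : ℝ, δ ≤ a → a < b → b ≤ R → ∃ r ∈ Icc a b, m r ≠ 0) ∧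
  ∀ ε : ℝ, 0 < ε → ∃ η : ℝ, 0 < η ∧
    ∀ r ∈ Icc δ R, ∀ s : ℝ, s ≠ 0 → |s| < η → |f r s / s - m r| < ε

/-- Condition (A3): `f(r,0) = 0` and `f(r,s)/φ₁(s) → ∞` as `s → 0`, uniformly in
`r ∈ [δ,R]`. -/
def CondA3 (δ R : ℝ) (f : ℝ → ℝ → ℝ) : Prop :=
  (∀ r ∈ Icc δ R, f r 0 = 0) ∧
  ∀ M : ℝ, ∃ η : ℝ, 0 < η ∧
    ∀ r ∈ Icc δ R, ∀ s : ℝ, s ≠ 0 → |s| < η → M < f r s / phi1 s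

/-- Condition (A4): `F(r,s) = ∫₀^s f(r,x) dx` is differentiable in `r ∈ [δ,R]` and
`|∂F/∂r(r,s)| ≤ ω(r) F(r,s)` for a continuous nonnegative `ω`. -/
def CondA4 (δ R : ℝ) (α : EReal) (f : ℝ → ℝ → ℝ) : Prop :=
  ∃ Fr : ℝ → ℝ → ℝ, ∃ ω : ℝ → ℝ,
    ContinuousOn ω (Icc δ R) ∧ (∀ r ∈ Icc δ R, 0 ≤ ω r) ∧
    ∀ s : ℝ, ((|s| : ℝ) : EReal) < α →
      (∀ r ∈ Icc δ R,
        HasDerivWithinAt (fun t => ∫ x in (0:ℝ)..s, f t x) (Fr r s) (Icc δ R) r) ∧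
      (∀ r ∈ Icc δ R, |Fr r s| ≤ ω r * ∫ x in (0:ℝ)..s, f r x)

/-- `u` (with derivative `u'`) is a solution of problem `(P)_{δ,λ}`:
`u ∈ C¹([δ,R])`, `|u'| < 1`, `r ↦ r^{N-1} φ₁(u'(r))` is continuously
differentiable, `(r^{N-1} φ₁(u'))' + λ r^{N-1} f(r,u) = 0` on `(δ,R)`, and
`u'(δ) = 0 = u(R)`. -/
def IsSolP (N : ℕ) (δ R lam : ℝ) (f : ℝ → ℝ → ℝ) (u u' : ℝ → ℝ) : Prop :=
  (∀ r ∈ Icc δ R, HasDerivWithinAt u (u' r) (Icc δ R) r) ∧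
  ContinuousOn u' (Icc δ R) ∧
  (∀ r ∈ Icc δ R, |u' r| < 1) ∧
  (∃ w' : ℝ → ℝ, ContinuousOn w' (Icc δ R) ∧
    (∀ r ∈ Icc δ R,
      HasDerivWithinAt (fun t => t ^ (N - 1) * phi1 (u' t)) (w' r) (Icc δ R) r) ∧
    ∀ r ∈ Ioo δ R, w' r + lam * r ^ (N - 1) * f r (u r) = 0) ∧
  u' δ = 0 ∧ u R = 0

/-- `u ∈ S^ν_{k,δ}`: `u'(δ) = u(R) = 0`, `u` has exactly `k-1` zeros in `(δ,R)`,
all simple (`u' ≠ 0` there), and `ν u > 0` on some interval `(δ, δ+σ)`. -/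
def InS (δ R : ℝ) (k : ℕ) (ν : ℝ) (u u' : ℝ → ℝ) : Prop :=
  u' δ = 0 ∧ u R = 0 ∧
  (∃ Z : Finset ℝ, Z.card = k - 1 ∧
    (∀ r : ℝ, r ∈ Z ↔ r ∈ Ioo δ R ∧ u r = 0) ∧
    ∀ r ∈ Z, u' r ≠ 0) ∧
  ∃ σ : ℝ, 0 < σ ∧ ∀ r ∈ Ioo δ (δ + σ), 0 < ν * u r

/-- `w` (with derivative `w'`) is a solution of the linear problem
`-(r^{N-1} w')' = λ r^{N-1} m(r) w` on `(δ,R)` with `w'(δ) = w(R) = 0`. -/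
def IsLinSol (N : ℕ) (δ R lam : ℝ) (m : ℝ → ℝ) (w w' : ℝ → ℝ) : Prop :=
  (∀ r ∈ Icc δ R, HasDerivWithinAt w (w' r) (Icc δ R) r) ∧
  ContinuousOn w' (Icc δ R) ∧
  (∃ g : ℝ → ℝ, ContinuousOn g (Icc δ R) ∧
    (∀ r ∈ Icc δ R,
      HasDerivWithinAt (fun t => t ^ (N - 1) * w' t) (g r) (Icc δ R) r) ∧
    ∀ r ∈ Ioo δ R, -g r = lam * r ^ (N - 1) * m r * w r) ∧
  w' δ = 0 ∧ w R = 0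

/-- `lam` is the `k`-th eigenvalue of the linear problem: it is positive and the
problem admits a nontrivial solution having exactly `k-1` simple zeros in
`(δ,R)`. -/
def IsKthEigen (N : ℕ) (δ R : ℝ) (m : ℝ → ℝ) (k : ℕ) (lam : ℝ) : Prop :=
  0 < lam ∧
  ∃ w w' : ℝ → ℝ, IsLinSol N δ R lam m w w' ∧ (∃ r ∈ Icc δ R, w r ≠ 0) ∧
    ∃ Z : Finset ℝ, Z.card = k - 1 ∧
      (∀ r : ℝ, r ∈ Z ↔ r ∈ Ioo δ R ∧ w r = 0) ∧
      ∀ r ∈ Z, w' r ≠ 0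

/-- The function `h(y) = (1-y²)^{3/2}` for `|y| ≤ 1`, `h(y) = 0` otherwise. -/
noncomputable def hcap (y : ℝ) : ℝ := if |y| ≤ 1 then (1 - y ^ 2) ^ ((3 : ℝ) / 2) else 0

/-- `φ₁⁻¹(y) = y / √(1 + y²)`, the inverse of `φ₁`. -/
noncomputable def phi1inv (y : ℝ) : ℝ := y / Real.sqrt (1 + y ^ 2)

/-- `Σ_δ`: the closure, in `ℝ × C¹([δ,R])` (realized as `ℝ × (C([δ,R]) × C([δ,R]))`
via `u ↦ (u, u')`), of the set of pairs `(λ, u)` with `λ ≥ 0` and `u` a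
nontrivial solution of `(P)_{δ,λ}`. -/
noncomputable def SigmaSet (N : ℕ) (δ R : ℝ) (f : ℝ → ℝ → ℝ) :
    Set (ℝ × (ContinuousMap (Icc δ R) ℝ × ContinuousMap (Icc δ R) ℝ)) :=
  closure {p | 0 ≤ p.1 ∧ ∃ u u' : ℝ → ℝ,
    IsSolP N δ R p.1 f u u' ∧
    (∀ x : Icc δ R, p.2.1 x = u x ∧ p.2.2 x = u' x) ∧
    ∃ r ∈ Icc δ R, u r ≠ 0}

/-!
On `[a, R]` with `δ < a`, the pair `F = (u, r^{N-1} φ₁(u'))` has derivative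
`F' = (u', -λ r^{N-1} f(r,u))`. Since `|s| ≤ |φ₁ s|`, `r^{N-1} ≥ a^{N-1} > 0`, and `f(r,·)` is
Lipschitz on the range of `u` with `f(r,0) = 0`, this gives `‖F'‖ ≤ K ‖F‖`, so Gronwall's
inequality on both sides of `τ` forces `F ≡ 0`. Letting `a ↓ δ` and using continuity of `u` gives
`u ≡ 0` on `[δ, R]`.
-/

section Gronwall

variable {E : Type*} [NormedAddCommGroup E] [NormedSpace ℝ E] {F F' : ℝ → E} {a b K : ℝ}

theorem eqOn_zero_of_norm_deriv_le_of_left (hc : ContinuousOn F (Icc a b))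
    (hd : ∀ t ∈ Ico a b, HasDerivAt F (F' t) t) (hb : ∀ t ∈ Ico a b, ‖F' t‖ ≤ K * ‖F t‖)
    (ha : F a = 0) : EqOn F 0 (Icc a b) := by
  intro t ht
  have h := norm_le_gronwallBound_of_norm_deriv_right_le (δ := 0) (ε := 0) hc
    (fun t ht => (hd t ht).hasDerivWithinAt) (by simp [ha]) (by simpa using hb) t ht
  rw [gronwallBound_ε0, zero_mul] at h
  exact norm_le_zero_iff.mp h

theorem eqOn_zero_of_norm_deriv_le_of_right (hc : ContinuousOn F (Icc a b))
    (hd : ∀ t ∈ Ioc a b, HasDerivAt F (F' t) t) (hb : ∀ t ∈ Ioc a b, ‖F' t‖ ≤ K * ‖F t‖)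
    (hb0 : F b = 0) : EqOn F 0 (Icc a b) := by
  have hneg : EqOn (fun s => F (-s)) 0 (Icc (-b) (-a)) := by
    refine eqOn_zero_of_norm_deriv_le_of_left (F' := fun s => -F' (-s)) (K := K) ?_ ?_ ?_
      (by simpa using hb0)
    · exact hc.comp continuousOn_neg fun s hs => ⟨le_neg.mpr hs.2, neg_le.mpr hs.1⟩
    · intro s hs
      simpa [Function.comp_def] using
        (hd (-s) ⟨lt_neg.mpr hs.2, neg_le.mpr hs.1⟩).scomp s (hasDerivAt_neg s)
    · intro s hs
      simpa using hb (-s) ⟨lt_neg.mpr hs.2, neg_le.mpr hs.1⟩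
  intro t ht
  simpa using hneg ⟨neg_le_neg ht.2, neg_le_neg ht.1⟩

theorem eqOn_zero_of_norm_deriv_le (hc : ContinuousOn F (Icc a b))
    (hd : ∀ t ∈ Ioo a b, HasDerivAt F (F' t) t) (hb : ∀ t ∈ Ioo a b, ‖F' t‖ ≤ K * ‖F t‖)
    {τ : ℝ} (hτ : τ ∈ Ioo a b) (hFτ : F τ = 0) : EqOn F 0 (Icc a b) := by
  have hleft : EqOn F 0 (Icc a τ) :=
    eqOn_zero_of_norm_deriv_le_of_right (hc.mono (Icc_subset_Icc_right hτ.2.le))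
      (fun t ht => hd t ⟨ht.1, ht.2.trans_lt hτ.2⟩)
      (fun t ht => hb t ⟨ht.1, ht.2.trans_lt hτ.2⟩) hFτ
  have hright : EqOn F 0 (Icc τ b) :=
    eqOn_zero_of_norm_deriv_le_of_left (hc.mono (Icc_subset_Icc_left hτ.1.le))
      (fun t ht => hd t ⟨hτ.1.trans_le ht.1, ht.2⟩)
      (fun t ht => hb t ⟨hτ.1.trans_le ht.1, ht.2⟩) hFτ
  intro t ht
  rcases le_total t τ with htτ | hτt
  · exact hleft ⟨ht.1, htτ⟩
  · exact hright ⟨hτt, ht.2⟩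

end Gronwall

theorem abs_le_abs_phi1 {s : ℝ} (hs : |s| < 1) : |s| ≤ |phi1 s| := by
  have hpos : 0 < Real.sqrt (1 - s ^ 2) := Real.sqrt_pos.mpr (by nlinarith [sq_abs s, abs_nonneg s])
  have hle : Real.sqrt (1 - s ^ 2) ≤ 1 := Real.sqrt_le_one.mpr (by nlinarith)
  rw [phi1, abs_div, abs_of_pos hpos, le_div_iff₀ hpos]
  nlinarith [abs_nonneg s]

theorem norm_prod_le_max_mul_norm_prod_phi1 (n : ℕ) {a r C x v y : ℝ} (ha : 0 < a) (har : a ≤ r)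
    (hv : |v| < 1) (hy : |y| ≤ C * |x|) :
    ‖(v, y)‖ ≤ max (a ^ n)⁻¹ C * ‖(x, r ^ n * phi1 v)‖ := by
  have hr0 : 0 < r := ha.trans_le har
  have hK : 0 ≤ max (a ^ n)⁻¹ C := (inv_nonneg.mpr (pow_pos ha n).le).trans (le_max_left _ _)
  simp only [Prod.norm_mk, Real.norm_eq_abs, abs_mul, abs_pow, abs_of_pos hr0]
  refine max_le ?_ ?_
  · calc |v| ≤ (a ^ n)⁻¹ * (r ^ n * |phi1 v|) := by
          rw [le_inv_mul_iff₀ (pow_pos ha n)]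
          exact mul_le_mul (pow_le_pow_left₀ ha.le har n) (abs_le_abs_phi1 hv) (abs_nonneg v)
            (pow_nonneg hr0.le n)
      _ ≤ max (a ^ n)⁻¹ C * max |x| (r ^ n * |phi1 v|) :=
          mul_le_mul (le_max_left _ _) (le_max_right _ _) (by positivity) hK
  · calc |y| ≤ C * |x| := hy
      _ ≤ max (a ^ n)⁻¹ C * max |x| (r ^ n * |phi1 v|) :=
          mul_le_mul (le_max_right _ _) (le_max_left _ _) (abs_nonneg x) hK

theorem eqOn_zero_of_radial_phi1_system {n : ℕ} {a b τ C : ℝ} {u u' w' : ℝ → ℝ} (ha : 0 < a)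
    (hτ : τ ∈ Ioo a b) (hu : ∀ r ∈ Icc a b, HasDerivWithinAt u (u' r) (Icc a b) r)
    (hu'lt : ∀ r ∈ Icc a b, |u' r| < 1)
    (hw : ∀ r ∈ Icc a b, HasDerivWithinAt (fun t => t ^ n * phi1 (u' t)) (w' r) (Icc a b) r)
    (hw' : ∀ r ∈ Ioo a b, |w' r| ≤ C * |u r|) (huτ : u τ = 0) (hu'τ : u' τ = 0) :
    EqOn u 0 (Icc a b) := by
  have hF := eqOn_zero_of_norm_deriv_le (F := fun r => (u r, r ^ n * phi1 (u' r)))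
    (F' := fun r => (u' r, w' r)) (K := max (a ^ n)⁻¹ C)
    (fun r hr => ((hu r hr).prodMk (hw r hr)).continuousWithinAt)
    (fun r hr => ((hu r (Ioo_subset_Icc_self hr)).prodMk
      (hw r (Ioo_subset_Icc_self hr))).hasDerivAt (Icc_mem_nhds hr.1 hr.2))
    (fun r hr => norm_prod_le_max_mul_norm_prod_phi1 n ha hr.1.le
      (hu'lt r (Ioo_subset_Icc_self hr)) (hw' r hr))
    hτ (by simp [huτ, hu'τ, phi1])
  exact fun r hr => congrArg Prod.fst (hF hr)

theorem exists_abs_apply_le_mul_abs {s : Set ℝ} (hs : IsCompact s) {f : ℝ → ℝ → ℝ}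
    (hfLip : ∀ K : ℝ, 0 < K → ∃ Lip : ℝ, 0 ≤ Lip ∧
      ∀ r ∈ s, ∀ x y : ℝ, |x| ≤ K → |y| ≤ K → |f r x - f r y| ≤ Lip * |x - y|)
    (hf0 : ∀ r ∈ s, f r 0 = 0) {u : ℝ → ℝ} (hu : ContinuousOn u s) :
    ∃ L, ∀ r ∈ s, |f r (u r)| ≤ L * |u r| := by
  obtain ⟨M, hM⟩ := hs.exists_bound_of_continuousOn hu
  obtain ⟨L, -, hL⟩ := hfLip (|M| + 1) (by positivity)
  refine ⟨L, fun r hr => ?_⟩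
  have hur : |u r| ≤ |M| + 1 := by linarith [Real.norm_eq_abs (u r) ▸ hM r hr, le_abs_self M]
  simpa [hf0 r hr] using hL r hr (u r) 0 hur (by rw [abs_zero]; positivity)

theorem stmt6_general (N : ℕ) (δ R lam : ℝ) (hδ : 0 ≤ δ) (hδR : δ < R)
    (f : ℝ → ℝ → ℝ)
    (hfLip : ∀ K : ℝ, 0 < K → ∃ Lip : ℝ, 0 ≤ Lip ∧
      ∀ r ∈ Icc δ R, ∀ s₁ s₂ : ℝ, |s₁| ≤ K → |s₂| ≤ K →
        |f r s₁ - f r s₂| ≤ Lip * |s₁ - s₂|)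
    (hf0 : ∀ r ∈ Icc δ R, f r 0 = 0)
    (τ : ℝ) (hτ : τ ∈ Ioo δ R)
    (u u' : ℝ → ℝ)
    (hu : ∀ r ∈ Icc δ R, HasDerivWithinAt u (u' r) (Icc δ R) r)
    (hu'lt : ∀ r ∈ Icc δ R, |u' r| < 1)
    (w' : ℝ → ℝ)
    (hw : ∀ r ∈ Icc δ R,
      HasDerivWithinAt (fun t => t ^ (N - 1) * phi1 (u' t)) (w' r) (Icc δ R) r)
    (heq : ∀ r ∈ Ioo δ R, w' r + lam * r ^ (N - 1) * f r (u r) = 0)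
    (huτ : u τ = 0) (hu'τ : u' τ = 0) :
    ∀ r ∈ Icc δ R, u r = 0 := by
  have huc : ContinuousOn u (Icc δ R) := fun r hr => (hu r hr).continuousWithinAt
  obtain ⟨L, hL⟩ := exists_abs_apply_le_mul_abs isCompact_Icc hfLip hf0 huc
  have hw'le : ∀ r ∈ Ioo δ R, |w' r| ≤ |lam| * R ^ (N - 1) * L * |u r| := by
    intro r hr
    have hr0 : 0 ≤ r := hδ.trans hr.1.le
    rw [show w' r = -(lam * r ^ (N - 1) * f r (u r)) by linarith [heq r hr], abs_neg, abs_mul,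
      abs_mul, abs_pow, abs_of_nonneg hr0, mul_assoc _ L]
    gcongr
    exacts [mul_nonneg (abs_nonneg lam) (pow_nonneg (hr0.trans hr.2.le) _), hr.2.le,
      hL r (Ioo_subset_Icc_self hr)]
  have hIcc : ∀ a ∈ Ioo δ τ, EqOn u 0 (Icc a R) := fun a ha =>
    have hsub : Icc a R ⊆ Icc δ R := Icc_subset_Icc_left ha.1.le
    eqOn_zero_of_radial_phi1_system (hδ.trans_lt ha.1) ⟨ha.2, hτ.2⟩
      (fun r hr => (hu r (hsub hr)).mono hsub) (fun r hr => hu'lt r (hsub hr))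
      (fun r hr => (hw r (hsub hr)).mono hsub) (fun r hr => hw'le r ⟨ha.1.trans hr.1, hr.2⟩)
      huτ hu'τ
  have hIoo : EqOn u 0 (Ioo δ R) := by
    intro r hr
    have hδm : δ < min r τ := lt_min hr.1 hτ.1
    exact hIcc ((δ + min r τ) / 2) ⟨by linarith, by linarith [min_le_right r τ]⟩
      ⟨by linarith [min_le_left r τ], hr.2.le⟩
  exact hIoo.of_subset_closure huc continuousOn_const Ioo_subset_Icc_self
    (closure_Ioo hδR.ne).ge

/-- Lemma 2.3. If `f` is continuous, Lipschitz in its second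
variable on bounded sets, and `f(r,0) ≡ 0`, then the only solution of the
equation `(r^{N-1} φ₁(u'))' + λ r^{N-1} f(r,u) = 0` with `u(τ) = u'(τ) = 0` at
some interior point `τ` is `u ≡ 0`. -/
theorem stmt6 (N : ℕ) (hN : 2 ≤ N) (δ R lam : ℝ) (hδ : 0 ≤ δ) (hδR : δ < R) (hlam : 0 ≤ lam)
    (f : ℝ → ℝ → ℝ)
    (hfc : ContinuousOn (fun p : ℝ × ℝ => f p.1 p.2) (Icc δ R ×ˢ (univ : Set ℝ)))
    (hfLip : ∀ K : ℝ, 0 < K → ∃ Lip : ℝ, 0 ≤ Lip ∧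
      ∀ r ∈ Icc δ R, ∀ s₁ s₂ : ℝ, |s₁| ≤ K → |s₂| ≤ K →
        |f r s₁ - f r s₂| ≤ Lip * |s₁ - s₂|)
    (hf0 : ∀ r ∈ Icc δ R, f r 0 = 0)
    (τ : ℝ) (hτ : τ ∈ Ioo δ R)
    (u u' : ℝ → ℝ)
    (hu : ∀ r ∈ Icc δ R, HasDerivWithinAt u (u' r) (Icc δ R) r)
    (hu'c : ContinuousOn u' (Icc δ R))
    (hu'lt : ∀ r ∈ Icc δ R, |u' r| < 1)
    (w' : ℝ → ℝ) (hw'c : ContinuousOn w' (Icc δ R))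
    (hw : ∀ r ∈ Icc δ R,
      HasDerivWithinAt (fun t => t ^ (N - 1) * phi1 (u' t)) (w' r) (Icc δ R) r)
    (heq : ∀ r ∈ Ioo δ R, w' r + lam * r ^ (N - 1) * f r (u r) = 0)
    (huτ : u τ = 0) (hu'τ : u' τ = 0) :
    ∀ r ∈ Icc δ R, u r = 0 :=
  stmt6_general N δ R lam hδ hδR f hfLip hf0 τ hτ u u' hu hu'lt w' hw heq huτ hu'τ
end

section
/- Let N ≥ 2 be an integer, 0 ≤ δ < R, λ ≥ 0, and let f satisfy (A1) and (A4). Then for every ε ∈ (0, 0.9] there exists d_ε ∈ (0, ε] such that: whenever u is a solution, on a subinterval [δ, β] ⊆ [δ, R], of the initial value problem (r^{N−1}φ₁(u'))' + λ r^{N−1} f(r,u) = 0, u(δ) = d, u'(δ) = 0 with |d| ≤ d_ε, then sup_{r∈[δ,β]} |u(r)| + sup_{r∈[δ,β]} |u'(r)| ≤ ε (in particular u stays in the region where the equation is defined, so it extends to all of [δ,R]). -/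
open Set Filter Topology

/-!
Along a solution the energy `H = (√(1 + φ₁(u')²) - 1) + λ F(r, u)` satisfies
`H' = λ ∂F/∂r - (N - 1) u' φ₁(u') / r ≤ λ ω F ≤ C H`, so Grönwall gives
`H(r) ≤ λ F(δ, d) e^{C (R - δ)} = O(|d|)`. As `√(1 + φ₁(s)²) - 1 ≥ s² / 2`, this makes `|u'|`
small, and then `|u| ≤ |d| + (R - δ) sup |u'|` is small too. The energy is defined all along
the solution because `|u'| < 1` keeps `|u| ≤ |d| + R`, which is below `α` once `|d| < α - R`.
-/

open MeasureTheory Asymptotics Function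

lemma phi1_zero : phi1 0 = 0 := by simp [phi1]

lemma mul_phi1_nonneg (s : ℝ) : 0 ≤ s * phi1 s := by
  rw [phi1, ← mul_div_assoc, ← sq]
  positivity

lemma continuousAt_phi1 {s : ℝ} (hs : |s| < 1) : ContinuousAt phi1 s := by
  have : 0 < 1 - s ^ 2 := by nlinarith [sq_abs s, abs_nonneg s]
  exact continuousAt_id.div (by fun_prop) (Real.sqrt_pos.2 this).ne'

lemma phi1inv_phi1 {s : ℝ} (hs : |s| < 1) : phi1inv (phi1 s) = s := by
  have h : 0 < 1 - s ^ 2 := by nlinarith [sq_abs s, abs_nonneg s]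
  have hsq := Real.sq_sqrt h.le
  have h1 : 1 + phi1 s ^ 2 = (Real.sqrt (1 - s ^ 2))⁻¹ ^ 2 := by
    rw [phi1, div_pow, hsq, inv_pow, hsq]
    field_simp
    ring
  rw [phi1inv, h1, Real.sqrt_sq (by positivity), phi1]
  field_simp

/-- The kinetic part of the energy, as a function of the momentum `p = φ₁(u')`. -/
noncomputable def kineticEnergy (p : ℝ) : ℝ := Real.sqrt (1 + p ^ 2) - 1

lemma kineticEnergy_zero : kineticEnergy 0 = 0 := by simp [kineticEnergy]

lemma one_le_sqrt_one_add_sq (p : ℝ) : 1 ≤ Real.sqrt (1 + p ^ 2) :=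
  Real.one_le_sqrt.2 (by nlinarith [sq_nonneg p])

lemma kineticEnergy_nonneg (p : ℝ) : 0 ≤ kineticEnergy p :=
  sub_nonneg.2 (one_le_sqrt_one_add_sq p)

lemma hasDerivAt_kineticEnergy (p : ℝ) : HasDerivAt kineticEnergy (phi1inv p) p := by
  have h := (((hasDerivAt_pow 2 p).const_add 1).sqrt (by positivity)).sub_const 1
  refine h.congr_deriv ?_
  rw [phi1inv]
  field_simp
  norm_num

lemma phi1inv_sq_le_two_mul_kineticEnergy (p : ℝ) : phi1inv p ^ 2 ≤ 2 * kineticEnergy p := by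
  have hg : 1 ≤ Real.sqrt (1 + p ^ 2) := one_le_sqrt_one_add_sq p
  have hg2 : Real.sqrt (1 + p ^ 2) ^ 2 = 1 + p ^ 2 := Real.sq_sqrt (by positivity)
  rw [phi1inv, kineticEnergy, div_pow, hg2, div_le_iff₀ (by positivity)]
  have hg1 : 0 ≤ 2 * Real.sqrt (1 + p ^ 2) + 1 := by linarith
  nlinarith [mul_nonneg (mul_nonneg (sub_nonneg.2 hg) (sub_nonneg.2 hg)) hg1]

theorem le_mul_exp_of_hasDerivAt_le_mul {H H' : ℝ → ℝ} {a b C : ℝ}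
    (hc : ContinuousOn H (Icc a b)) (hd : ∀ t ∈ Ioo a b, HasDerivAt H (H' t) t)
    (hle : ∀ t ∈ Ioo a b, H' t ≤ C * H t) :
    ∀ t ∈ Icc a b, H t ≤ H a * Real.exp (C * (t - a)) := by
  have hexp (t : ℝ) : HasDerivAt (fun s => Real.exp (-C * s)) (Real.exp (-C * t) * -C) t := by
    simpa using ((hasDerivAt_id t).const_mul (-C)).exp
  have hanti : AntitoneOn (fun t => H t * Real.exp (-C * t)) (Icc a b) := by
    refine antitoneOn_of_hasDerivWithinAt_nonpos (convex_Icc a b)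
      (f' := fun t => H' t * Real.exp (-C * t) + H t * (Real.exp (-C * t) * -C))
      (hc.mul (by fun_prop)) (fun t ht => ?_) (fun t ht => ?_)
    · rw [interior_Icc] at ht
      exact ((hd t ht).mul (hexp t)).hasDerivWithinAt
    · rw [interior_Icc] at ht
      have := mul_le_mul_of_nonneg_right (hle t ht) (Real.exp_pos (-C * t)).le
      linarith
  intro t ht
  have key := hanti ⟨le_rfl, ht.1.trans ht.2⟩ ht ht.1
  have h1 : H t = H t * Real.exp (-C * t) * Real.exp (C * t) := by
    rw [mul_assoc, ← Real.exp_add]; simp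
  have h2 : H a * Real.exp (C * (t - a)) = H a * Real.exp (-C * a) * Real.exp (C * t) := by
    rw [mul_assoc, ← Real.exp_add]; ring_nf
  rw [h1, h2]
  exact mul_le_mul_of_nonneg_right key (Real.exp_pos _).le

lemma HasDerivAt.of_pow_mul {n : ℕ} {v : ℝ → ℝ} {W t : ℝ} (ht : t ≠ 0)
    (h : HasDerivAt (fun s => s ^ n * v s) W t) :
    HasDerivAt v ((W - n * t ^ (n - 1) * v t) / t ^ n) t := by
  have htn : t ^ n ≠ 0 := pow_ne_zero n ht
  refine ((h.div (hasDerivAt_pow n t) htn).congr_deriv ?_).congr_of_eventuallyEq ?_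
  · field_simp
  · filter_upwards [isOpen_ne.mem_nhds ht] with s hs
    simp [pow_ne_zero n hs]

theorem kineticEnergy_add_mul_le_mul_exp {n : ℕ} {a b lam C : ℝ} {u' w' g G G' : ℝ → ℝ}
    (ha : 0 ≤ a) (hlam : 0 ≤ lam) (hC : 0 ≤ C)
    (hu'c : ContinuousOn u' (Icc a b)) (hu'lt : ∀ t ∈ Icc a b, |u' t| < 1)
    (hw : ∀ t ∈ Ioo a b, HasDerivAt (fun s => s ^ n * phi1 (u' s)) (w' t) t)
    (hode : ∀ t ∈ Ioo a b, w' t + lam * t ^ n * g t = 0)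
    (hGc : ContinuousOn G (Icc a b))
    (hG : ∀ t ∈ Ioo a b, HasDerivAt G (G' t + g t * u' t) t)
    (hG' : ∀ t ∈ Ioo a b, G' t ≤ C * G t) :
    ∀ t ∈ Icc a b, kineticEnergy (phi1 (u' t)) + lam * G t ≤
      (kineticEnergy (phi1 (u' a)) + lam * G a) * Real.exp (C * (t - a)) := by
  refine le_mul_exp_of_hasDerivAt_le_mul (H' := fun t => phi1inv (phi1 (u' t)) *
    ((w' t - n * t ^ (n - 1) * phi1 (u' t)) / t ^ n) + lam * (G' t + g t * u' t))
    ?_ (fun t ht => ?_) (fun t ht => ?_)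
  · refine ContinuousOn.add (fun t ht => ?_) (continuousOn_const.mul hGc)
    exact (hasDerivAt_kineticEnergy _).continuousAt.comp_continuousWithinAt
      ((continuousAt_phi1 (hu'lt t ht)).comp_continuousWithinAt (hu'c t ht))
  · have ht0 : t ≠ 0 := (ha.trans_lt ht.1).ne'
    exact ((hasDerivAt_kineticEnergy _).comp t ((hw t ht).of_pow_mul ht0)).add
      ((hG t ht).const_mul lam)
  · have ht0 : 0 < t := ha.trans_lt ht.1
    have hut : |u' t| < 1 := hu'lt t (Ioo_subset_Icc_self ht)
    rw [phi1inv_phi1 hut, show w' t = -(lam * t ^ n * g t) by linarith [hode t ht]]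
    have hfric : 0 ≤ u' t * (n * t ^ (n - 1) * phi1 (u' t)) / t ^ n := by
      rw [mul_left_comm]
      exact div_nonneg (mul_nonneg (by positivity) (mul_phi1_nonneg _)) (by positivity)
    have hkey : u' t * ((-(lam * t ^ n * g t) - n * t ^ (n - 1) * phi1 (u' t)) / t ^ n)
        + lam * (G' t + g t * u' t)
        = lam * G' t - u' t * (n * t ^ (n - 1) * phi1 (u' t)) / t ^ n := by
      field_simp
      ring
    rw [hkey]
    nlinarith [mul_le_mul_of_nonneg_left (hG' t ht) hlam,
      mul_nonneg hC (kineticEnergy_nonneg (phi1 (u' t)))]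

lemma intervalIntegral_nonneg_of_mul_nonneg {g : ℝ → ℝ} {s : ℝ}
    (h : ∀ x, |x| ≤ |s| → x ≠ 0 → 0 ≤ g x * x) : 0 ≤ ∫ x in (0:ℝ)..s, g x := by
  rcases le_total 0 s with hs | hs
  · rw [intervalIntegral.integral_of_le hs]
    refine setIntegral_nonneg measurableSet_Ioc fun x hx => ?_
    have hxs : |x| ≤ |s| := by rw [abs_of_pos hx.1, abs_of_nonneg hs]; exact hx.2
    exact nonneg_of_mul_nonneg_left (h x hxs hx.1.ne') hx.1
  · rw [intervalIntegral.integral_symm, intervalIntegral.integral_of_le hs,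
      integral_Ioc_eq_integral_Ioo, neg_nonneg]
    refine setIntegral_nonpos measurableSet_Ioo fun x hx => ?_
    have hxs : |x| ≤ |s| := by rw [abs_of_neg hx.2, abs_of_nonpos hs]; linarith [hx.1]
    exact nonpos_of_mul_nonneg_left (h x hxs hx.2.ne) hx.2

theorem HasDerivWithinAt.intervalIntegral_comp {f : ℝ → ℝ → ℝ} {u : ℝ → ℝ} {s : Set ℝ}
    {t₀ u₀' : ℝ} (hu : HasDerivWithinAt u u₀' s t₀)
    (hf : ContinuousWithinAt (uncurry f) (s ×ˢ univ) (t₀, u t₀))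
    (hint : ∀ᶠ t in 𝓝[s] t₀, IntervalIntegrable (f t) volume (u t₀) (u t)) :
    HasDerivWithinAt (fun t => ∫ x in u t₀..u t, f t x) (f t₀ (u t₀) * u₀') s t₀ := by
  set c := f t₀ (u t₀)
  have hrem : (fun t => (∫ x in u t₀..u t, f t x) - c * (u t - u t₀)) =o[𝓝[s] t₀]
      fun t => u t - u t₀ := by
    refine IsLittleO.of_bound fun ε hε => ?_
    obtain ⟨η, hη, hfη⟩ := Metric.continuousWithinAt_iff.1 hf ε hε
    have hut : ∀ᶠ t in 𝓝[s] t₀, dist (u t) (u t₀) < η :=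
      Metric.tendsto_nhds.1 hu.continuousWithinAt η hη
    have htt : ∀ᶠ t in 𝓝[s] t₀, dist t t₀ < η :=
      nhdsWithin_le_nhds (Metric.ball_mem_nhds t₀ hη)
    filter_upwards [hint, hut, htt, self_mem_nhdsWithin] with t hint hut htt hts
    have hbound : ∀ x ∈ uIoc (u t₀) (u t), ‖f t x - c‖ ≤ ε := by
      intro x hx
      have hx : |x - u t₀| ≤ |u t - u t₀| := abs_sub_left_of_mem_uIcc (uIoc_subset_uIcc hx)
      refine (hfη (x := (t, x)) ⟨hts, mem_univ x⟩ ?_).le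
      rw [Prod.dist_eq, max_lt_iff, Real.dist_eq x]
      exact ⟨htt, hx.trans_lt hut⟩
    calc ‖(∫ x in u t₀..u t, f t x) - c * (u t - u t₀)‖
        = ‖∫ x in u t₀..u t, (f t x - c)‖ := by
          rw [intervalIntegral.integral_sub hint intervalIntegrable_const,
            intervalIntegral.integral_const, smul_eq_mul, mul_comm]
      _ ≤ ε * |u t - u t₀| := intervalIntegral.norm_integral_le_of_norm_le_const hbound
      _ = ε * ‖u t - u t₀‖ := rfl
  refine HasDerivWithinAt.of_isLittleO ?_
  have hlin := (hu.isLittleO.const_mul_left c).add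
    (hrem.trans_isBigO hu.hasFDerivWithinAt.isBigO_sub)
  refine hlin.congr (fun t => ?_) (fun _ => rfl)
  simp only [intervalIntegral.integral_same, smul_eq_mul]
  ring

theorem hasDerivWithinAt_intervalIntegral_comp_of_continuousOn {f : ℝ → ℝ → ℝ} {u : ℝ → ℝ}
    {s : Set ℝ} {ρ t₀ u₀' F' : ℝ} (hf : ContinuousOn (uncurry f) (s ×ˢ Icc (-ρ) ρ))
    (ht₀ : t₀ ∈ s) (hu : HasDerivWithinAt u u₀' s t₀) (hu₀ : |u t₀| < ρ)
    (hus : ∀ t ∈ s, |u t| ≤ ρ)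
    (hFt : HasDerivWithinAt (fun t => ∫ x in (0:ℝ)..u t₀, f t x) F' s t₀) :
    HasDerivWithinAt (fun t => ∫ x in (0:ℝ)..u t, f t x) (F' + f t₀ (u t₀) * u₀') s t₀ := by
  have hIcc : ∀ t ∈ s, u t ∈ Icc (-ρ) ρ := fun t ht => abs_le.1 (hus t ht)
  have hρ : 0 ≤ ρ := (abs_nonneg _).trans (hus t₀ ht₀)
  have h0 : (0:ℝ) ∈ Icc (-ρ) ρ := ⟨by linarith, hρ⟩
  have hint : ∀ t ∈ s, ∀ a ∈ Icc (-ρ) ρ, ∀ b ∈ Icc (-ρ) ρ,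
      IntervalIntegrable (f t) volume a b := fun t ht a ha b hb =>
    ((hf.comp (continuous_const.prodMk continuous_id).continuousOn fun x hx => ⟨ht, hx⟩).mono
      (uIcc_subset_Icc ha hb)).intervalIntegrable
  have hfw : ContinuousWithinAt (uncurry f) (s ×ˢ univ) (t₀, u t₀) := by
    refine (hf _ ⟨ht₀, hIcc t₀ ht₀⟩).mono_of_mem_nhdsWithin
      (nhdsWithin_prod self_mem_nhdsWithin ?_)
    rw [nhdsWithin_univ]
    exact Icc_mem_nhds (by linarith [neg_abs_le (u t₀)]) (by linarith [le_abs_self (u t₀)])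
  have hmem : ∀ᶠ t in 𝓝[s] t₀, t ∈ s := self_mem_nhdsWithin
  refine (hFt.add (hu.intervalIntegral_comp hfw ?_)).congr_of_eventuallyEq ?_ (by simp)
  · filter_upwards [hmem] with t ht
    exact hint t ht _ (hIcc t₀ ht₀) _ (hIcc t ht)
  · filter_upwards [hmem] with t ht
    exact (intervalIntegral.integral_add_adjacent_intervals
      (hint t ht _ h0 _ (hIcc t₀ ht₀)) (hint t ht _ (hIcc t₀ ht₀) _ (hIcc t ht))).symm

lemma abs_sub_le_mul_of_hasDerivWithinAt {u u' : ℝ → ℝ} {a b L t : ℝ}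
    (hu : ∀ x ∈ Icc a b, HasDerivWithinAt u (u' x) (Icc a b) x)
    (hL : ∀ x ∈ Icc a b, |u' x| ≤ L) (ht : t ∈ Icc a b) : |u t - u a| ≤ L * (t - a) := by
  have h := (convex_Icc a b).norm_image_sub_le_of_norm_hasDerivWithin_le hu hL
    (left_mem_Icc.2 (ht.1.trans ht.2)) ht
  rwa [Real.norm_eq_abs, Real.norm_eq_abs, abs_of_nonneg (sub_nonneg.2 ht.1)] at h

def IsLocalSol (n : ℕ) (δ β lam : ℝ) (f : ℝ → ℝ → ℝ) (u u' : ℝ → ℝ) : Prop :=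
  (∀ r ∈ Icc δ β, HasDerivWithinAt u (u' r) (Icc δ β) r) ∧
  ContinuousOn u' (Icc δ β) ∧
  (∀ r ∈ Icc δ β, |u' r| < 1) ∧
  ∃ w' : ℝ → ℝ, ContinuousOn w' (Icc δ β) ∧
    (∀ r ∈ Icc δ β,
      HasDerivWithinAt (fun t => t ^ n * phi1 (u' t)) (w' r) (Icc δ β) r) ∧
    ∀ r ∈ Ioo δ β, w' r + lam * r ^ n * f r (u r) = 0

lemma CondA1.exists_radius {R : ℝ} {α : EReal} {f : ℝ → ℝ → ℝ} (h : CondA1 R α f) :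
    ∃ ρ : ℝ, R < ρ ∧ ContinuousOn (uncurry f) (Icc 0 R ×ˢ Icc (-ρ) ρ) ∧
      ∀ x : ℝ, |x| ≤ ρ → ((|x| : ℝ) : EReal) < α := by
  obtain ⟨ρ, hRρ, hρα⟩ := EReal.exists_between_coe_real h.1
  have hlt : ∀ x : ℝ, |x| ≤ ρ → ((|x| : ℝ) : EReal) < α := fun x hx =>
    (EReal.coe_le_coe_iff.2 hx).trans_lt hρα
  exact ⟨ρ, EReal.coe_lt_coe_iff.1 hRρ,
    h.2.1.mono fun p hp => ⟨hp.1, hlt _ (abs_le.2 hp.2)⟩, hlt⟩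

theorem IsLocalSol.kineticEnergy_le {n : ℕ} {δ β R lam ρ C : ℝ} {f Fr : ℝ → ℝ → ℝ}
    {u u' : ℝ → ℝ} (hsol : IsLocalSol n δ β lam f u u') (hδ : 0 ≤ δ) (hβR : β ≤ R)
    (hlam : 0 ≤ lam) (hC : 0 ≤ C) (hf : ContinuousOn (uncurry f) (Icc 0 R ×ˢ Icc (-ρ) ρ))
    (hsign : ∀ t ∈ Icc 0 R, ∀ x, |x| ≤ ρ → x ≠ 0 → 0 ≤ f t x * x)
    (hFr : ∀ s, |s| ≤ ρ → ∀ t ∈ Icc δ R,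
      HasDerivWithinAt (fun t => ∫ x in (0:ℝ)..s, f t x) (Fr t s) (Icc δ R) t)
    (hFrC : ∀ s, |s| ≤ ρ → ∀ t ∈ Icc δ R, Fr t s ≤ C * ∫ x in (0:ℝ)..s, f t x)
    (hu'δ : u' δ = 0) (hudom : ∀ t ∈ Icc δ β, |u t| < ρ) :
    ∀ t ∈ Icc δ β, kineticEnergy (phi1 (u' t)) ≤
      lam * (∫ x in (0:ℝ)..u δ, f δ x) * Real.exp (C * (t - δ)) := by
  obtain ⟨hu, hu'c, hu'lt, w', -, hw, hode⟩ := hsol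
  have hsub : Icc δ β ⊆ Icc δ R := Icc_subset_Icc le_rfl hβR
  have hsub0 : Icc δ β ⊆ Icc 0 R := Icc_subset_Icc hδ hβR
  have hnhds : ∀ t ∈ Ioo δ β, Icc δ β ∈ 𝓝 t := fun t ht => Icc_mem_nhds ht.1 ht.2
  set G := fun t => ∫ x in (0:ℝ)..u t, f t x
  have hG : ∀ t ∈ Icc δ β, HasDerivWithinAt G (Fr t (u t) + f t (u t) * u' t) (Icc δ β) t :=
    fun t ht => hasDerivWithinAt_intervalIntegral_comp_of_continuousOn
      (hf.mono (prod_mono hsub0 le_rfl)) ht (hu t ht) (hudom t ht) (fun t ht => (hudom t ht).le)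
      ((hFr (u t) (hudom t ht).le t (hsub ht)).mono hsub)
  have henergy := kineticEnergy_add_mul_le_mul_exp hδ hlam hC hu'c hu'lt
    (fun t ht => (hw t (Ioo_subset_Icc_self ht)).hasDerivAt (hnhds t ht)) hode
    (fun t ht => (hG t ht).continuousWithinAt)
    (fun t ht => (hG t (Ioo_subset_Icc_self ht)).hasDerivAt (hnhds t ht))
    (fun t ht => hFrC _ (hudom t (Ioo_subset_Icc_self ht)).le t (hsub (Ioo_subset_Icc_self ht)))
  intro t ht
  have hGt : 0 ≤ G t := intervalIntegral_nonneg_of_mul_nonneg fun x hx hx0 =>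
    hsign t (hsub0 ht) x (hx.trans (hudom t ht).le) hx0
  have := henergy t ht
  rw [hu'δ, phi1_zero, kineticEnergy_zero, zero_add] at this
  linarith [mul_nonneg hlam hGt]

theorem exists_kineticEnergy_le_mul_abs {n : ℕ} {δ R lam : ℝ} {α : EReal} {f : ℝ → ℝ → ℝ}
    (hδ : 0 ≤ δ) (hδR : δ ≤ R) (hlam : 0 ≤ lam) (hA1 : CondA1 R α f) (hA4 : CondA4 δ R α f) :
    ∃ ρ, R < ρ ∧ ∃ K, 0 ≤ K ∧ ∀ β ≤ R, ∀ u u', IsLocalSol n δ β lam f u u' → u' δ = 0 →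
      (∀ t ∈ Icc δ β, |u t| < ρ) → ∀ t ∈ Icc δ β, kineticEnergy (phi1 (u' t)) ≤ K * |u δ| := by
  obtain ⟨ρ, hRρ, hf, hρα⟩ := hA1.exists_radius
  obtain ⟨Fr, ω, hωc, -, hFr⟩ := hA4
  obtain ⟨B, hB⟩ := isCompact_Icc.exists_bound_of_continuousOn
    (hf.comp (continuous_const.prodMk continuous_id).continuousOn fun x hx => ⟨⟨hδ, hδR⟩, hx⟩)
  obtain ⟨C, hC⟩ := isCompact_Icc.exists_bound_of_continuousOn hωc
  have hC0 : 0 ≤ C := (norm_nonneg _).trans (hC δ ⟨le_rfl, hδR⟩)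
  have hB0 : 0 ≤ B := (norm_nonneg _).trans (hB 0 ⟨by linarith, by linarith⟩)
  have hsign : ∀ t ∈ Icc 0 R, ∀ x, |x| ≤ ρ → x ≠ 0 → 0 ≤ f t x * x :=
    fun t ht x hx hx0 => (hA1.2.2 t ht x (hρα x hx) hx0).le
  have hFrC : ∀ s, |s| ≤ ρ → ∀ t ∈ Icc δ R, Fr t s ≤ C * ∫ x in (0:ℝ)..s, f t x := by
    intro s hs t ht
    have hF0 : 0 ≤ ∫ x in (0:ℝ)..s, f t x := intervalIntegral_nonneg_of_mul_nonneg
      fun x hx hx0 => hsign t ⟨hδ.trans ht.1, ht.2⟩ x (hx.trans hs) hx0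
    exact (le_abs_self _).trans (((hFr s (hρα s hs)).2 t ht).trans
      (mul_le_mul_of_nonneg_right ((le_abs_self _).trans (hC t ht)) hF0))
  refine ⟨ρ, hRρ, lam * B * Real.exp (C * (R - δ)), by positivity, ?_⟩
  intro β hβR u u' hsol hu'δ hudom t ht
  have hFδ : |∫ x in (0:ℝ)..u δ, f δ x| ≤ B * |u δ| := by
    have hbd : ∀ x ∈ uIoc 0 (u δ), ‖f δ x‖ ≤ B := fun x hx => by
      have hx' := abs_sub_left_of_mem_uIcc (uIoc_subset_uIcc hx)
      rw [sub_zero, sub_zero] at hx'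
      exact hB x (abs_le.1 (hx'.trans (hudom δ ⟨le_rfl, ht.1.trans ht.2⟩).le))
    simpa using intervalIntegral.norm_integral_le_of_norm_le_const hbd
  calc kineticEnergy (phi1 (u' t))
      ≤ lam * (∫ x in (0:ℝ)..u δ, f δ x) * Real.exp (C * (t - δ)) :=
        hsol.kineticEnergy_le hδ hβR hlam hC0 hf hsign (fun s hs => (hFr s (hρα s hs)).1) hFrC
          hu'δ hudom t ht
    _ ≤ lam * (B * |u δ|) * Real.exp (C * (R - δ)) := by
        gcongr
        · exact (le_abs_self _).trans hFδ
        · linarith [ht.2]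
    _ = lam * B * Real.exp (C * (R - δ)) * |u δ| := by ring

theorem stmt7_general (N : ℕ) (δ R lam : ℝ) (hδ : 0 ≤ δ) (hδR : δ < R) (hlam : 0 ≤ lam)
    (α : EReal) (f : ℝ → ℝ → ℝ) (hA1 : CondA1 R α f) (hA4 : CondA4 δ R α f) :
    ∀ ε : ℝ, 0 < ε → ε ≤ 0.9 →
      ∃ dε : ℝ, 0 < dε ∧ dε ≤ ε ∧
        ∀ d β : ℝ, |d| ≤ dε → δ < β → β ≤ R →
        ∀ u u' : ℝ → ℝ,
          (∀ r ∈ Icc δ β, HasDerivWithinAt u (u' r) (Icc δ β) r) →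
          ContinuousOn u' (Icc δ β) →
          (∀ r ∈ Icc δ β, |u' r| < 1) →
          (∃ w' : ℝ → ℝ, ContinuousOn w' (Icc δ β) ∧
            (∀ r ∈ Icc δ β,
              HasDerivWithinAt (fun t => t ^ (N - 1) * phi1 (u' t)) (w' r) (Icc δ β) r) ∧
            ∀ r ∈ Ioo δ β, w' r + lam * r ^ (N - 1) * f r (u r) = 0) →
          u δ = d → u' δ = 0 →
          ∀ r ∈ Icc δ β, ∀ r' ∈ Icc δ β, |u r| + |u' r'| ≤ ε := by
  obtain ⟨ρ, hRρ, K, hK, hkin⟩ :=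
    exists_kineticEnergy_le_mul_abs (n := N - 1) hδ hδR.le hlam hA1 hA4
  intro ε hε _
  set M := ε / (2 + (R - δ))
  have hMε : M * (2 + (R - δ)) = ε := div_mul_cancel₀ ε (by linarith)
  have hM : 0 < M := div_pos hε (by linarith)
  refine ⟨min M (min ((ρ - R) / 2) (M ^ 2 / (2 * (K + 1)))), by positivity,
    (min_le_left _ _).trans (by nlinarith), ?_⟩
  intro d β hd hδβ hβR u u' hu hu'c hu'lt hode hud hu'δ r hr r' hr'
  rw [← hud] at hd
  have hdM : |u δ| ≤ M := hd.trans (min_le_left _ _)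
  have hdρ : |u δ| ≤ (ρ - R) / 2 := hd.trans ((min_le_right _ _).trans (min_le_left _ _))
  have hdK : K * |u δ| ≤ M ^ 2 / 2 := by
    have := hd.trans ((min_le_right _ _).trans (min_le_right _ _))
    rw [le_div_iff₀ (by positivity)] at this
    nlinarith [abs_nonneg (u δ)]
  have hdom : ∀ t ∈ Icc δ β, |u t| < ρ := fun t ht => by
    have := abs_sub_le_mul_of_hasDerivWithinAt hu (fun x hx => (hu'lt x hx).le) ht
    linarith [abs_sub_abs_le_abs_sub (u t) (u δ), ht.2]
  have hu'M : ∀ t ∈ Icc δ β, |u' t| ≤ M := fun t ht => by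
    refine abs_le_of_sq_le_sq ?_ hM.le
    calc u' t ^ 2 = phi1inv (phi1 (u' t)) ^ 2 := by rw [phi1inv_phi1 (hu'lt t ht)]
      _ ≤ 2 * kineticEnergy (phi1 (u' t)) := phi1inv_sq_le_two_mul_kineticEnergy _
      _ ≤ M ^ 2 := by linarith [hkin β hβR u u' ⟨hu, hu'c, hu'lt, hode⟩ hu'δ hdom t ht]
  have huM := abs_sub_le_mul_of_hasDerivWithinAt hu hu'M hr
  nlinarith [abs_sub_abs_le_abs_sub (u r) (u δ), hu'M r' hr', hr.2]

/-- Lemma 2.4. Under (A1) and (A4), for every `ε ∈ (0, 0.9]`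
there is `d_ε ∈ (0, ε]` such that any local solution of the initial value
problem `(r^{N-1} φ₁(u'))' + λ r^{N-1} f(r,u) = 0`, `u(δ) = d`, `u'(δ) = 0` with
`|d| ≤ d_ε` satisfies `sup |u| + sup |u'| ≤ ε` on its interval of definition. -/
theorem stmt7 (N : ℕ) (hN : 2 ≤ N) (δ R lam : ℝ) (hδ : 0 ≤ δ) (hδR : δ < R) (hlam : 0 ≤ lam)
    (α : EReal) (f : ℝ → ℝ → ℝ) (hA1 : CondA1 R α f) (hA4 : CondA4 δ R α f) :
    ∀ ε : ℝ, 0 < ε → ε ≤ 0.9 →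
      ∃ dε : ℝ, 0 < dε ∧ dε ≤ ε ∧
        ∀ d β : ℝ, |d| ≤ dε → δ < β → β ≤ R →
        ∀ u u' : ℝ → ℝ,
          (∀ r ∈ Icc δ β, HasDerivWithinAt u (u' r) (Icc δ β) r) →
          ContinuousOn u' (Icc δ β) →
          (∀ r ∈ Icc δ β, |u' r| < 1) →
          (∃ w' : ℝ → ℝ, ContinuousOn w' (Icc δ β) ∧
            (∀ r ∈ Icc δ β,
              HasDerivWithinAt (fun t => t ^ (N - 1) * phi1 (u' t)) (w' r) (Icc δ β) r) ∧
            ∀ r ∈ Ioo δ β, w' r + lam * r ^ (N - 1) * f r (u r) = 0) →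
          u δ = d → u' δ = 0 →
          ∀ r ∈ Icc δ β, ∀ r' ∈ Icc δ β, |u r| + |u' r'| ≤ ε :=
  stmt7_general N δ R lam hδ hδR hlam α f hA1 hA4
end
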